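/- arXiv:1506.06353 — 2 statements merged into one kernel-verified Lean document; each statement's English description precedes it below -/
import Mathlib

section
/- If there exists a nonzero holomorphic function f on ℂ^g satisfying f(u + γ) = χ(γ) e^{ν H(u + γ/2, γ)} f(u) for all u ∈ ℂ^g and γ ∈ Γ, then the triple (ν, Γ, χ) satisfies the cocycle condition χ(γ + γ') = χ(γ) χ(γ') e^{iν E(γ, γ')} for all γ, γ' ∈ Γ. -/
/-- Existence of a nonzero entire function satisfying the automorphy functional equation
forces the cocycle (Riemann–Dirac quantization) condition on (ν, Γ, χ). -/
theorem cocycle_of_nonzero_automorphic (g : ℕ) (ν : ℝ) (hν : 0 < ν)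
    (H : (Fin g → ℂ) → (Fin g → ℂ) → ℂ)
    (hadd : ∀ u v w, H (u + v) w = H u w + H v w)
    (hsmul : ∀ (a : ℂ) (u v), H (a • u) v = a * H u v)
    (hconj : ∀ u v, H v u = (starRingEnd ℂ) (H u v))
    (hpos : ∀ u, u ≠ 0 → 0 < (H u u).re)
    (Γ : AddSubgroup (Fin g → ℂ)) (χ : Γ → ℂ)
    (hχ : ∀ γ, ‖χ γ‖ = 1)
    (f : (Fin g → ℂ) → ℂ) (hf : Differentiable ℂ f) (hf0 : f ≠ 0)
    (hFE : ∀ (u : Fin g → ℂ) (γ : Γ),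
      f (u + (γ : Fin g → ℂ)) =
        χ γ * Complex.exp ((ν : ℂ) * H (u + (2 : ℂ)⁻¹ • (γ : Fin g → ℂ)) γ) * f u) :
    ∀ γ γ' : Γ, χ (γ + γ') =
      χ γ * χ γ' *
        Complex.exp (Complex.I * (ν : ℂ) *
          (((H (γ : Fin g → ℂ) (γ' : Fin g → ℂ)).im : ℝ) : ℂ)) := by
  obtain ⟨u, hu⟩ := Function.ne_iff.mp hf0
  intro γ γ'
  -- additivity in the second slot
  have hadd2 : ∀ a b c, H a (b + c) = H a b + H a c := by
    intro a b c
    rw [hconj b a, hconj c a, hconj (b + c) a, hadd, map_add]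
  -- conjugate relation as an explicit formula
  have hc : H (γ' : Fin g → ℂ) (γ : Fin g → ℂ)
      = H (γ : Fin g → ℂ) (γ' : Fin g → ℂ)
        - 2 * ((H (γ : Fin g → ℂ) (γ' : Fin g → ℂ)).im : ℂ) * Complex.I := by
    rw [hconj]
    have := Complex.sub_conj (H (γ : Fin g → ℂ) (γ' : Fin g → ℂ))
    push_cast at this ⊢
    linear_combination -this
  have e1 := hFE u (γ + γ')
  have e2 := hFE (u + (γ : Fin g → ℂ)) γ'
  have e3 := hFE u γ
  rw [e3] at e2
  have hcoe : ((γ + γ' : Γ) : Fin g → ℂ) = (γ : Fin g → ℂ) + (γ' : Fin g → ℂ) := rfl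
  rw [hcoe, ← add_assoc] at e1
  rw [e1] at e2
  -- exponent identity
  have key : (ν : ℂ) * H (u + (γ : Fin g → ℂ) + (2 : ℂ)⁻¹ • (γ' : Fin g → ℂ)) (γ' : Fin g → ℂ)
      + (ν : ℂ) * H (u + (2 : ℂ)⁻¹ • (γ : Fin g → ℂ)) (γ : Fin g → ℂ)
      = (ν : ℂ) * H (u + (2 : ℂ)⁻¹ • ((γ : Fin g → ℂ) + (γ' : Fin g → ℂ)))
          ((γ : Fin g → ℂ) + (γ' : Fin g → ℂ))
        + Complex.I * (ν : ℂ) * (((H (γ : Fin g → ℂ) (γ' : Fin g → ℂ)).im : ℝ) : ℂ) := by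
    simp only [smul_add, hadd, hadd2, hsmul, hc]
    ring
  have hfu : f u ≠ 0 := hu
  have hexp : Complex.exp ((ν : ℂ) * H (u + (2 : ℂ)⁻¹ • ((γ : Fin g → ℂ) + (γ' : Fin g → ℂ)))
      ((γ : Fin g → ℂ) + (γ' : Fin g → ℂ))) ≠ 0 := Complex.exp_ne_zero _
  have main : χ (γ + γ') * (Complex.exp ((ν : ℂ) * H (u + (2 : ℂ)⁻¹ • ((γ : Fin g → ℂ) + (γ' : Fin g → ℂ)))
        ((γ : Fin g → ℂ) + (γ' : Fin g → ℂ))) * f u)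
      = (χ γ * χ γ' * Complex.exp (Complex.I * (ν : ℂ) *
          (((H (γ : Fin g → ℂ) (γ' : Fin g → ℂ)).im : ℝ) : ℂ)))
        * (Complex.exp ((ν : ℂ) * H (u + (2 : ℂ)⁻¹ • ((γ : Fin g → ℂ) + (γ' : Fin g → ℂ)))
        ((γ : Fin g → ℂ) + (γ' : Fin g → ℂ))) * f u) := by
    have hE : Complex.exp ((ν : ℂ) * H (u + (γ : Fin g → ℂ) + (2 : ℂ)⁻¹ • (γ' : Fin g → ℂ)) (γ' : Fin g → ℂ))
        * Complex.exp ((ν : ℂ) * H (u + (2 : ℂ)⁻¹ • (γ : Fin g → ℂ)) (γ : Fin g → ℂ))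
        = Complex.exp ((ν : ℂ) * H (u + (2 : ℂ)⁻¹ • ((γ : Fin g → ℂ) + (γ' : Fin g → ℂ)))
            ((γ : Fin g → ℂ) + (γ' : Fin g → ℂ)))
          * Complex.exp (Complex.I * (ν : ℂ) * (((H (γ : Fin g → ℂ) (γ' : Fin g → ℂ)).im : ℝ) : ℂ)) := by
      rw [← Complex.exp_add, ← Complex.exp_add, key]
    linear_combination e2 + (χ γ * χ γ' * f u) * hE
  exact mul_right_cancel₀ (mul_ne_zero hexp hfu) main
end

section
/- A holomorphic function f on ℂ^g satisfies f(u + γ) = χ_α(γ) e^{ν H(u + γ/2, γ)} f(u) for all u ∈ ℂ^g, γ ∈ Γ_r, if and only if f(u) = e^{(ν/2)B(z,z) + 2πi α·z} f*(u) for some holomorphic function f* on ℂ^g that is Γ_r-periodic (i.e. periodic of period 1 in each of the first r complex coordinates). -/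
/-- Coordinate bilinear form B(z,w) = Σ zⱼ wₖ H(ωⱼ,ωₖ). -/
noncomputable def Bform {r : ℕ} (B : Matrix (Fin r) (Fin r) ℝ) (z w : Fin r → ℂ) : ℂ :=
  ∑ j, ∑ k, z j * w k * (B j k : ℂ)

/-- Hermitian form in coordinates u = (z, z⊥). -/
noncomputable def Hform {r s : ℕ} (B : Matrix (Fin r) (Fin r) ℝ)
    (u v : (Fin r → ℂ) × (Fin s → ℂ)) : ℂ :=
  Bform B u.1 (star v.1) + ∑ j, u.2 j * starRingEnd ℂ (v.2 j)

/-- The lattice element of Γ_r ≅ ℤ^r in coordinates. -/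
noncomputable def latt {r s : ℕ} (m : Fin r → ℤ) : (Fin r → ℂ) × (Fin s → ℂ) :=
  ((fun j => (m j : ℂ)), 0)

lemma Bform_add_left {r : ℕ} (B : Matrix (Fin r) (Fin r) ℝ) (z z' w : Fin r → ℂ) :
    Bform B (z + z') w = Bform B z w + Bform B z' w := by
  simp [Bform, add_mul, Finset.sum_add_distrib]

lemma Bform_add_right {r : ℕ} (B : Matrix (Fin r) (Fin r) ℝ) (z w w' : Fin r → ℂ) :
    Bform B z (w + w') = Bform B z w + Bform B z w' := by
  simp [Bform, mul_add, add_mul, Finset.sum_add_distrib]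

lemma Bform_smul_left {r : ℕ} (B : Matrix (Fin r) (Fin r) ℝ) (c : ℂ) (z w : Fin r → ℂ) :
    Bform B (c • z) w = c * Bform B z w := by
  simp [Bform, Finset.mul_sum, smul_eq_mul, mul_assoc]

lemma Bform_comm {r : ℕ} {B : Matrix (Fin r) (Fin r) ℝ} (hsymm : B.IsSymm)
    (z w : Fin r → ℂ) : Bform B z w = Bform B w z := by
  rw [Bform, Finset.sum_comm, Bform]
  refine Finset.sum_congr rfl fun k _ => Finset.sum_congr rfl fun j _ => ?_
  rw [← hsymm.apply j k]
  ring

lemma Hform_latt {r s : ℕ} (B : Matrix (Fin r) (Fin r) ℝ)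
    (v : (Fin r → ℂ) × (Fin s → ℂ)) (m : Fin r → ℤ) :
    Hform B v (latt m) = Bform B v.1 (fun j => (m j : ℂ)) := by
  have h1 : star (latt (s := s) m).1 = fun j => (m j : ℂ) := by
    funext j
    simp [latt]
  unfold Hform
  rw [h1]
  simp [latt]

lemma expo_key {r s : ℕ} (ν : ℝ) {B : Matrix (Fin r) (Fin r) ℝ} (hsymm : B.IsSymm)
    (α : Fin r → ℝ) (u : (Fin r → ℂ) × (Fin s → ℂ)) (m : Fin r → ℤ) :
    (ν : ℂ) / 2 * Bform B (u + latt m).1 (u + latt m).1 +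
        2 * (Real.pi : ℂ) * Complex.I * ∑ j, (α j : ℂ) * (u + latt m).1 j
      = ((ν : ℂ) / 2 * Bform B u.1 u.1 +
          2 * (Real.pi : ℂ) * Complex.I * ∑ j, (α j : ℂ) * u.1 j)
        + (2 * (Real.pi : ℂ) * Complex.I * ∑ j, (α j : ℂ) * (m j : ℂ)
          + (ν : ℂ) * Hform B (u + (2 : ℂ)⁻¹ • latt m) (latt m)) := by
  set zm : Fin r → ℂ := fun j => (m j : ℂ) with hzm
  have h1 : (u + latt (s := s) m).1 = u.1 + zm := rfl
  have h2 : (u + (2 : ℂ)⁻¹ • latt (s := s) m).1 = u.1 + (2 : ℂ)⁻¹ • zm := rfl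
  rw [Hform_latt, h1, h2]
  rw [Bform_add_left, Bform_add_right, Bform_add_right, Bform_add_left,
    Bform_smul_left, Bform_comm hsymm zm u.1]
  have h3 : ∑ j, (α j : ℂ) * (u.1 + zm) j = ∑ j, (α j : ℂ) * u.1 j + ∑ j, (α j : ℂ) * zm j := by
    rw [← Finset.sum_add_distrib]
    exact Finset.sum_congr rfl fun j _ => by simp [Pi.add_apply]; ring
  rw [h3]
  ring

lemma exp_helper1 (a b c x : ℂ) :
    Complex.exp (-(c + (a + b))) * (Complex.exp a * Complex.exp b * x) = Complex.exp (-c) * x := by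
  rw [Complex.exp_neg, Complex.exp_neg, Complex.exp_add, Complex.exp_add]
  field_simp [Complex.exp_ne_zero]

lemma exp_helper2 (a b c x : ℂ) :
    Complex.exp (c + (a + b)) * x = Complex.exp a * Complex.exp b * (Complex.exp c * x) := by
  rw [Complex.exp_add, Complex.exp_add]
  ring

/-- A holomorphic f satisfies the (Γ_r, χ_α)-functional equation iff
f(u) = e^{(ν/2)B(z,z) + 2πi α·z} f*(u) with f* holomorphic and Γ_r-periodic. -/
theorem automorphic_iff_periodic_factor (r s : ℕ) (ν : ℝ) (hν : 0 < ν)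
    (B : Matrix (Fin r) (Fin r) ℝ) (hsymm : B.IsSymm) (hpos : B.PosDef)
    (α : Fin r → ℝ)
    (f : (Fin r → ℂ) × (Fin s → ℂ) → ℂ) (hf : Differentiable ℂ f) :
    (∀ (u : (Fin r → ℂ) × (Fin s → ℂ)) (m : Fin r → ℤ),
        f (u + latt m) =
          Complex.exp (2 * (Real.pi : ℂ) * Complex.I * ∑ j, (α j : ℂ) * (m j : ℂ)) *
            Complex.exp ((ν : ℂ) * Hform B (u + (2 : ℂ)⁻¹ • latt m) (latt m)) * f u)
    ↔
    (∃ fstar : (Fin r → ℂ) × (Fin s → ℂ) → ℂ,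
        Differentiable ℂ fstar ∧
        (∀ (u : (Fin r → ℂ) × (Fin s → ℂ)) (m : Fin r → ℤ),
            fstar (u + latt m) = fstar u) ∧
        (∀ u : (Fin r → ℂ) × (Fin s → ℂ),
            f u = Complex.exp ((ν : ℂ) / 2 * Bform B u.1 u.1 +
                2 * (Real.pi : ℂ) * Complex.I * ∑ j, (α j : ℂ) * u.1 j) *
              fstar u)) := by
  set q : (Fin r → ℂ) × (Fin s → ℂ) → ℂ := fun u =>
    (ν : ℂ) / 2 * Bform B u.1 u.1 +
      2 * (Real.pi : ℂ) * Complex.I * ∑ j, (α j : ℂ) * u.1 j with hq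
  have hqdiff : Differentiable ℂ q := by
    apply Differentiable.add
    · apply Differentiable.const_mul
      unfold Bform
      apply Differentiable.fun_sum
      intro j _
      apply Differentiable.fun_sum
      intro k _
      have hj : Differentiable ℂ fun u : (Fin r → ℂ) × (Fin s → ℂ) => u.1 j := by fun_prop
      have hk : Differentiable ℂ fun u : (Fin r → ℂ) × (Fin s → ℂ) => u.1 k := by fun_prop
      exact (hj.mul hk).mul_const _
    · apply Differentiable.const_mul
      apply Differentiable.fun_sum
      intro j _
      fun_prop
  constructor
  · intro hfun
    refine ⟨fun u => Complex.exp (-(q u)) * f u, ((hqdiff.neg).cexp).mul hf, ?_, ?_⟩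
    · intro u m
      have hk := expo_key (s := s) ν hsymm α u m
      show Complex.exp (-q (u + latt m)) * f (u + latt m) = Complex.exp (-q u) * f u
      rw [hfun u m]
      have : q (u + latt m) = q u + (2 * (Real.pi : ℂ) * Complex.I * ∑ j, (α j : ℂ) * (m j : ℂ)
          + (ν : ℂ) * Hform B (u + (2 : ℂ)⁻¹ • latt m) (latt m)) := hk
      rw [this]
      exact exp_helper1 _ _ _ _
    · intro u
      rw [← mul_assoc, ← Complex.exp_add]
      simp [hq]
  · rintro ⟨fstar, hdiff, hper, hfeq⟩
    intro u m
    have hk := expo_key (s := s) ν hsymm α u m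
    rw [hfeq (u + latt m), hfeq u, hper u m, hk]
    exact exp_helper2 _ _ _ _
end
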